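/- If x₀ is supported on T with m > 2|T| and y = Ax₀, then for any index k ∉ T and any L with |T|+1 ≤ L ≤ m−|T|−1, the truncated column a_k^L does NOT lie in the column span of the Hankel matrix Y = Hankel(y); i.e., sin∠(a_k^L, Ran Y) > 0. -/

import Mathlib

/-! With `ζ_j = exp(2πi j/n)` the samples are `y_t = ∑_{j ∈ T} x₀_j ζ_j^t`, so the `q`-th column
of the Hankel matrix is `∑_{j ∈ T} x₀_j ζ_j^q a_j` with `a_j = (ζ_j^p)_{p<L}`, and `Ran Y` lies in
`span {a_j | j ∈ T}`. The nodes `ζ_j` are distinct roots of unity, so for `L ≥ |T| + 1` the vectors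
`a_j`, `j ∈ T ∪ {k}`, are rows of a truncated Vandermonde matrix and hence linearly independent:
`a_k ∉ Ran Y`, and its residual after orthogonal projection onto `Ran Y` is nonzero. -/

noncomputable def partialFourier (m n : ℕ) : Matrix (Fin m) (Fin n) ℂ :=
  Matrix.of fun j k => Complex.exp (2 * Real.pi * Complex.I * j * k / n)

def hankel (m L : ℕ) (y : Fin m → ℂ) : Matrix (Fin L) (Fin (m - L)) ℂ :=
  Matrix.of fun p q => y ⟨p.1 + q.1, by have := p.2; have := q.2; omega⟩

noncomputable def sinAngle {L : ℕ} (v : EuclideanSpace ℂ (Fin L))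
    (V : Submodule ℂ (EuclideanSpace ℂ (Fin L))) : ℝ :=
  ‖v - (V.orthogonalProjectionOnto v : EuclideanSpace ℂ (Fin L))‖ / ‖v‖

noncomputable def colSpan {L M : ℕ} (Y : Matrix (Fin L) (Fin M) ℂ) :
    Submodule ℂ (EuclideanSpace ℂ (Fin L)) :=
  Submodule.span ℂ (Set.range fun q : Fin M => (WithLp.toLp 2 (fun p => Y p q) : EuclideanSpace ℂ (Fin L)))

open Matrix Finset

theorem linearIndepOn_pow_of_injOn {K ι : Type*} [Field K] {z : ι → K} {s : Finset ι} {L : ℕ}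
    (hz : Set.InjOn z s) (hs : s.card ≤ L) :
    LinearIndepOn K (fun i (p : Fin L) => z i ^ (p : ℕ)) (s : Set ι) := by
  let e : Fin s.card ≃ (s : Set ι) := s.equivFin.symm
  have hdet : (vandermonde fun a => z (e a)).det ≠ 0 :=
    det_vandermonde_ne_zero_iff.2 (hz.injective.comp e.injective)
  have hrows : LinearIndependent K (vandermonde fun a => z (e a)) :=
    linearIndependent_rows_iff_isUnit.2 ((isUnit_iff_isUnit_det _).2 hdet.isUnit)
  rw [LinearIndepOn, ← linearIndependent_equiv e]
  exact LinearIndependent.of_comp (LinearMap.funLeft K K (Fin.castLE hs)) hrows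

theorem colSpan_hankel_le_span {ι : Type*} {m L : ℕ} {y : Fin m → ℂ} {T : Finset ι} {c z : ι → ℂ}
    (hy : ∀ t, y t = ∑ j ∈ T, c j * z j ^ (t : ℕ)) :
    colSpan (hankel m L y) ≤
      Submodule.span ℂ ((fun j => WithLp.toLp 2 fun p : Fin L => z j ^ (p : ℕ)) '' T) := by
  rw [colSpan, Submodule.span_le]
  rintro _ ⟨q, rfl⟩
  have hq : (WithLp.toLp 2 fun p => hankel m L y p q : EuclideanSpace ℂ (Fin L)) =
      ∑ j ∈ T, (c j * z j ^ (q : ℕ)) • WithLp.toLp 2 fun p : Fin L => z j ^ (p : ℕ) := by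
    ext p
    simp [hankel, hy, pow_add, Finset.sum_apply, mul_assoc, mul_comm]
  beta_reduce
  rw [SetLike.mem_coe, hq]
  exact Submodule.sum_mem _ fun j hj => Submodule.smul_mem _ _ (Submodule.subset_span ⟨j, hj, rfl⟩)

theorem sinAngle_pos_of_notMem {L : ℕ} {v : EuclideanSpace ℂ (Fin L)}
    {V : Submodule ℂ (EuclideanSpace ℂ (Fin L))} (hv : v ∉ V) : 0 < sinAngle v V := by
  have hv0 : v ≠ 0 := fun h => hv (h ▸ V.zero_mem)
  have hproj : v - V.orthogonalProjectionOnto v ≠ 0 :=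
    sub_ne_zero.2 fun h => hv (h ▸ (V.orthogonalProjectionOnto v).2)
  exact div_pos (norm_pos_iff.2 hproj) (norm_pos_iff.2 hv0)

noncomputable def fourierNode (n : ℕ) (k : Fin n) : ℂ :=
  Complex.exp (2 * Real.pi * Complex.I / n) ^ (k : ℕ)

theorem partialFourier_apply (m n : ℕ) (j : Fin m) (k : Fin n) :
    partialFourier m n j k = fourierNode n k ^ (j : ℕ) := by
  rw [fourierNode, ← pow_mul, ← Complex.exp_nat_mul, partialFourier, of_apply]
  congr 1
  push_cast
  ring

theorem fourierNode_injective (n : ℕ) : Function.Injective (fourierNode n) := by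
  rcases Nat.eq_zero_or_pos n with rfl | hn
  · exact fun i => i.elim0
  · exact fun i j h => Fin.ext <| (Complex.isPrimitiveRoot_exp n hn.ne').pow_inj i.2 j.2 h

theorem partialFourier_mulVec_eq_sum {m n : ℕ} {x : Fin n → ℂ} {T : Finset (Fin n)}
    (hx : ∀ j ∉ T, x j = 0) (t : Fin m) :
    (partialFourier m n *ᵥ x) t = ∑ j ∈ T, x j * fourierNode n j ^ (t : ℕ) := by
  rw [mulVec, dotProduct, ← sum_subset (subset_univ T) fun j _ hj => by simp [hx j hj]]
  exact sum_congr rfl fun j _ => by rw [partialFourier_apply, mul_comm]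

/-- With `m > 2|T|`, `y = A x₀` supported on `T`, and `|T|+1 ≤ L ≤ m−|T|−1`, for any index
`k ∉ T` the truncated column `a_k^L` does not lie in the column span of `Hankel(y)`:
its angle with `Ran Y` has positive sine. -/
theorem column_outside_support_positive_angle (m n L : ℕ)
    (x₀ : Fin n → ℂ) (T : Finset (Fin n)) (hsupp : ∀ k, x₀ k ≠ 0 ↔ k ∈ T)
    (hL1 : T.card + 1 ≤ L) (hL2 : L ≤ m - T.card - 1)
    (y : Fin m → ℂ) (hy : y = (partialFourier m n).mulVec x₀)
    (k : Fin n) (hk : k ∉ T) :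
    0 < sinAngle (WithLp.toLp 2 (fun p : Fin L => partialFourier m n ⟨p.1, by have := p.2; omega⟩ k) :
        EuclideanSpace ℂ (Fin L)) (colSpan (hankel m L y)) := by
  set a : Fin n → EuclideanSpace ℂ (Fin L) := fun j =>
    WithLp.toLp 2 fun p : Fin L => fourierNode n j ^ (p : ℕ)
  have hcol : colSpan (hankel m L y) ≤ Submodule.span ℂ (a '' T) :=
    colSpan_hankel_le_span fun t =>
      hy ▸ partialFourier_mulVec_eq_sum (fun j hj => by_contra fun h => hj ((hsupp j).1 h)) t
  have hli : LinearIndepOn ℂ a (insert k T : Finset (Fin n)) := by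
    have h := linearIndepOn_pow_of_injOn (L := L) (fourierNode_injective n).injOn
      (by rw [card_insert_of_notMem hk]; omega : (insert k T).card ≤ L)
    exact h.map' (WithLp.linearEquiv 2 ℂ (Fin L → ℂ)).symm.toLinearMap
      (WithLp.linearEquiv 2 ℂ (Fin L → ℂ)).symm.ker
  rw [coe_insert, linearIndepOn_insert (by simpa)] at hli
  refine sinAngle_pos_of_notMem fun hmem => hli.2 (hcol ?_)
  convert hmem using 2
  ext p
  simp [partialFourier_apply]
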